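/- arXiv:1501.01533 — 4 statements merged into one kernel-verified Lean document; each statement's English description precedes it below -/
import Mathlib

section
/- For unit vectors v, w in ℝ³ and a diagonal matrix D = diag(λ₁,λ₂,λ₃) with 0 < λ₁ ≤ λ₂ ≤ λ₃, the quantity G(v,w) := tr(D⁻¹) - wᵀD⁻¹w - vᵀD⁻¹v - tr(D⁻¹)(v·w)² + 2(v·w)(wᵀD⁻¹v) satisfies G(v,w) ≥ λ₃⁻¹(1 - (v·w)²). -/
/-- Lower bound `G(v,w) ≥ λ₃⁻¹ (1 - (v·w)²)` for unit vectors `v, w`. -/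
theorem stmt1 (lam : Fin 3 → ℝ) (h0 : 0 < lam 0) (h01 : lam 0 ≤ lam 1) (h12 : lam 1 ≤ lam 2)
    (v w : Fin 3 → ℝ) (hv : ∑ i, v i ^ 2 = 1) (hw : ∑ i, w i ^ 2 = 1) :
    (lam 2)⁻¹ * (1 - (∑ i, v i * w i) ^ 2) ≤
      (∑ i, (lam i)⁻¹) - (∑ i, (lam i)⁻¹ * w i ^ 2) - (∑ i, (lam i)⁻¹ * v i ^ 2)
        - (∑ i, (lam i)⁻¹) * (∑ i, v i * w i) ^ 2
        + 2 * (∑ i, v i * w i) * (∑ i, (lam i)⁻¹ * w i * v i) := by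
  simp only [Fin.sum_univ_three] at hv hw ⊢
  have h1 : 0 < lam 1 := h0.trans_le h01
  have h2 : 0 < lam 2 := h1.trans_le h12
  have hm0 : (lam 2)⁻¹ ≤ (lam 0)⁻¹ := inv_anti₀ h0 (h01.trans h12)
  have hm1 : (lam 2)⁻¹ ≤ (lam 1)⁻¹ := inv_anti₀ h1 h12
  have key :
      ((lam 0)⁻¹ + (lam 1)⁻¹ + (lam 2)⁻¹)
        - ((lam 0)⁻¹ * w 0 ^ 2 + (lam 1)⁻¹ * w 1 ^ 2 + (lam 2)⁻¹ * w 2 ^ 2)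
        - ((lam 0)⁻¹ * v 0 ^ 2 + (lam 1)⁻¹ * v 1 ^ 2 + (lam 2)⁻¹ * v 2 ^ 2)
        - ((lam 0)⁻¹ + (lam 1)⁻¹ + (lam 2)⁻¹) * (v 0 * w 0 + v 1 * w 1 + v 2 * w 2) ^ 2
        + 2 * (v 0 * w 0 + v 1 * w 1 + v 2 * w 2)
            * ((lam 0)⁻¹ * w 0 * v 0 + (lam 1)⁻¹ * w 1 * v 1 + (lam 2)⁻¹ * w 2 * v 2)
        - (lam 2)⁻¹ * (1 - (v 0 * w 0 + v 1 * w 1 + v 2 * w 2) ^ 2)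
      = ((lam 0)⁻¹ - (lam 2)⁻¹) * (v 1 * w 2 - v 2 * w 1) ^ 2
        + ((lam 1)⁻¹ - (lam 2)⁻¹) * (v 0 * w 2 - v 2 * w 0) ^ 2 := by
    linear_combination
      ((lam 0)⁻¹ * (w 0 ^ 2 - 1) + (lam 1)⁻¹ * (w 1 ^ 2 - 1)
        + (lam 2)⁻¹ * (w 2 ^ 2 - 1) - (lam 2)⁻¹ + 2 * (lam 2)⁻¹) * hv
      + (-(lam 0)⁻¹ * (v 1 ^ 2 + v 2 ^ 2) - (lam 1)⁻¹ * (v 0 ^ 2 + v 2 ^ 2)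
        - (lam 2)⁻¹ * (v 0 ^ 2 + v 1 ^ 2) - (lam 2)⁻¹ + (lam 2)⁻¹ * (1 + v 0 ^ 2 + v 1 ^ 2 + v 2 ^ 2)) * hw
  nlinarith [mul_nonneg (sub_nonneg.2 hm0) (sq_nonneg (v 1 * w 2 - v 2 * w 1)),
    mul_nonneg (sub_nonneg.2 hm1) (sq_nonneg (v 0 * w 2 - v 2 * w 0)), key]
end

section
/- For unit vectors v, w in ℝ³, a diagonal matrix D = diag(λ₁,λ₂,λ₃) with 0 < λ₁ ≤ λ₂ ≤ λ₃, and a positive constant m, the quantity F(v,w) := tr(D⁻¹) - wᵀD⁻¹w - vᵀD⁻¹v - tr(D⁻¹)(v·w)² + 2(v·w)(wᵀD⁻¹v) + m(v·w)² satisfies F(v,w) ≥ min(λ₃⁻¹, m) > 0. -/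
lemma key_aux (a b mu2 m c u0 u1 u2 w0 w1 w2 : ℝ)
    (ha : 0 ≤ a) (hb : 0 ≤ b) (hmu2 : 0 < mu2) (hm : 0 < m)
    (hw : w0 ^ 2 + w1 ^ 2 + w2 ^ 2 = 1)
    (huw : u0 * w0 + u1 * w1 + u2 * w2 = 0)
    (hu : u0 ^ 2 + u1 ^ 2 + u2 ^ 2 = 1 - c ^ 2) :
    min mu2 m ≤
      ((mu2 + a + b) + (mu2 + b) + mu2)
        - ((mu2 + a + b) * w0 ^ 2 + (mu2 + b) * w1 ^ 2 + mu2 * w2 ^ 2)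
        - ((mu2 + a + b) * (u0 + c * w0) ^ 2 + (mu2 + b) * (u1 + c * w1) ^ 2
            + mu2 * (u2 + c * w2) ^ 2)
        - ((mu2 + a + b) + (mu2 + b) + mu2) * c ^ 2
        + 2 * c * ((mu2 + a + b) * w0 * (u0 + c * w0) + (mu2 + b) * w1 * (u1 + c * w1)
            + mu2 * w2 * (u2 + c * w2))
        + m * c ^ 2 := by
  have hs0 : 0 ≤ 1 - c ^ 2 := by nlinarith [sq_nonneg u0, sq_nonneg u1, sq_nonneg u2]
  have hAeq : (1 - w0 ^ 2) * (1 - c ^ 2) - u0 ^ 2 = (u1 * w2 - u2 * w1) ^ 2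
      + (-(u1 ^ 2 + u2 ^ 2)) * (w0 ^ 2 + w1 ^ 2 + w2 ^ 2 - 1)
      + (u1 * w1 + u2 * w2 - u0 * w0) * (u0 * w0 + u1 * w1 + u2 * w2)
      + (-(1 - w0 ^ 2)) * (u0 ^ 2 + u1 ^ 2 + u2 ^ 2 - (1 - c ^ 2)) := by ring
  have hA : 0 ≤ (1 - w0 ^ 2) * (1 - c ^ 2) - u0 ^ 2 := by
    rw [hAeq, hw, huw, hu]
    nlinarith [sq_nonneg (u1 * w2 - u2 * w1)]
  have hB : 0 ≤ w2 ^ 2 * (1 - c ^ 2) + u2 ^ 2 := by positivity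
  set t := min mu2 m with ht
  have ht2 : t ≤ mu2 := min_le_left _ _
  have htm : t ≤ m := min_le_right _ _
  have identity :
      ((mu2 + a + b) + (mu2 + b) + mu2)
        - ((mu2 + a + b) * w0 ^ 2 + (mu2 + b) * w1 ^ 2 + mu2 * w2 ^ 2)
        - ((mu2 + a + b) * (u0 + c * w0) ^ 2 + (mu2 + b) * (u1 + c * w1) ^ 2
            + mu2 * (u2 + c * w2) ^ 2)
        - ((mu2 + a + b) + (mu2 + b) + mu2) * c ^ 2
        + 2 * c * ((mu2 + a + b) * w0 * (u0 + c * w0) + (mu2 + b) * w1 * (u1 + c * w1)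
            + mu2 * w2 * (u2 + c * w2))
        + m * c ^ 2
      = a * ((1 - w0 ^ 2) * (1 - c ^ 2) - u0 ^ 2)
        + b * (w2 ^ 2 * (1 - c ^ 2) + u2 ^ 2)
        + mu2 * (1 - c ^ 2) + m * c ^ 2 := by
    linear_combination (-(1 - c ^ 2) * (mu2 + b)) * hw + (-(mu2 + b)) * hu
  have h3 : 0 ≤ (mu2 - t) * (1 - c ^ 2) := mul_nonneg (by linarith) hs0
  have h4 : 0 ≤ (m - t) * c ^ 2 := mul_nonneg (by linarith) (sq_nonneg c)
  have h5 : 0 ≤ a * ((1 - w0 ^ 2) * (1 - c ^ 2) - u0 ^ 2) := mul_nonneg ha hA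
  have h6 : 0 ≤ b * (w2 ^ 2 * (1 - c ^ 2) + u2 ^ 2) := mul_nonneg hb hB
  nlinarith [identity, h3, h4, h5, h6]

/-- Lower bound `F(v,w) ≥ min(λ₃⁻¹, m) > 0` for unit vectors `v, w`. -/
theorem stmt2 (lam : Fin 3 → ℝ) (h0 : 0 < lam 0) (h01 : lam 0 ≤ lam 1) (h12 : lam 1 ≤ lam 2)
    (m : ℝ) (hm : 0 < m)
    (v w : Fin 3 → ℝ) (hv : ∑ i, v i ^ 2 = 1) (hw : ∑ i, w i ^ 2 = 1) :
    min (lam 2)⁻¹ m ≤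
      (∑ i, (lam i)⁻¹) - (∑ i, (lam i)⁻¹ * w i ^ 2) - (∑ i, (lam i)⁻¹ * v i ^ 2)
        - (∑ i, (lam i)⁻¹) * (∑ i, v i * w i) ^ 2
        + 2 * (∑ i, v i * w i) * (∑ i, (lam i)⁻¹ * w i * v i)
        + m * (∑ i, v i * w i) ^ 2
    ∧ 0 < min (lam 2)⁻¹ m := by
  simp only [Fin.sum_univ_three] at hv hw ⊢
  have h1 : 0 < lam 1 := lt_of_lt_of_le h0 h01
  have h2 : 0 < lam 2 := lt_of_lt_of_le h1 h12
  have hmu2 : 0 < (lam 2)⁻¹ := inv_pos.mpr h2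
  have hmu21 : (lam 2)⁻¹ ≤ (lam 1)⁻¹ := by
    exact inv_anti₀ h1 h12
  have hmu10 : (lam 1)⁻¹ ≤ (lam 0)⁻¹ := by
    exact inv_anti₀ h0 h01
  refine ⟨?_, lt_min hmu2 hm⟩
  set c : ℝ := v 0 * w 0 + v 1 * w 1 + v 2 * w 2 with hc
  have huw : (v 0 - c * w 0) * w 0 + (v 1 - c * w 1) * w 1 + (v 2 - c * w 2) * w 2 = 0 := by
    rw [hc]; linear_combination (-(v 0 * w 0 + v 1 * w 1 + v 2 * w 2)) * hw
  have hu : (v 0 - c * w 0) ^ 2 + (v 1 - c * w 1) ^ 2 + (v 2 - c * w 2) ^ 2 = 1 - c ^ 2 := by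
    rw [hc]; linear_combination hv + (v 0 * w 0 + v 1 * w 1 + v 2 * w 2) ^ 2 * hw
  have hkey := key_aux ((lam 0)⁻¹ - (lam 1)⁻¹) ((lam 1)⁻¹ - (lam 2)⁻¹) (lam 2)⁻¹ m c
    (v 0 - c * w 0) (v 1 - c * w 1) (v 2 - c * w 2) (w 0) (w 1) (w 2)
    (by linarith) (by linarith) hmu2 hm hw huw hu
  refine le_trans (le_of_eq ?_) (le_trans hkey (le_of_eq ?_))
  · ring
  · rw [hc]; ring
end

section
/- Let ε be a symmetric positive definite 3×3 real matrix with eigenvalues λ₁ ≤ λ₂ ≤ λ₃ bounded between λ > 0 and Λ, and let μ > 0 be a scalar. Then for M^A = m μ⁻¹ I with m > 0, the tensor C^A_{ijkℓ} = μ δ_{ij} M^A_{ℓk} - C̃_{ijkℓ}, where C̃_{ijkℓ} is built from ε⁻¹ as C̃_{ijkℓ} = δ_{jℓ}(ε⁻¹)_{ki} + δ_{ik}(ε⁻¹)_{ℓj} - δ_{jk}(ε⁻¹)_{ℓi} - δ_{iℓ}(ε⁻¹)_{kj} + (δ_{iℓ}δ_{jk} - δ_{ik}δ_{jℓ}) tr(ε⁻¹),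 satisfies the strong ellipticity (Legendre–Hadamard) condition: Σ_{ijkℓ} C^A_{ijkℓ} a_i a_k b_j b_ℓ ≥ min(Λ⁻¹, m) |a|² |b|² for all a, b ∈ ℝ³. -/
/-- The Kronecker delta. -/
def kron (a b : Fin 3) : ℝ := if a = b then 1 else 0

lemma key_inv_bound (eps E : Matrix (Fin 3) (Fin 3) ℝ) (heps : eps.IsSymm)
    (hinv : eps * E = 1) (Lam : ℝ) (hL : 0 < Lam)
    (hlb : ∀ u : Fin 3 → ℝ, 0 ≤ ∑ i, ∑ j, u i * eps i j * u j)
    (hub : ∀ u : Fin 3 → ℝ, (∑ i, ∑ j, u i * eps i j * u j) ≤ Lam * ∑ i, u i ^ 2)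
    (x : Fin 3 → ℝ) :
    Lam⁻¹ * (∑ i, x i ^ 2) ≤ ∑ i, ∑ j, x i * E i j * x j := by
  set y : Fin 3 → ℝ := E.mulVec x with hy
  have hyx : eps.mulVec y = x := by
    rw [hy, Matrix.mulVec_mulVec, hinv, Matrix.one_mulVec]
  have hx : ∀ i, eps i 0 * y 0 + eps i 1 * y 1 + eps i 2 * y 2 = x i := by
    intro i
    have := congrFun hyx i
    simpa [Matrix.mulVec, dotProduct, Fin.sum_univ_three] using this
  have hyd : ∀ i, y i = E i 0 * x 0 + E i 1 * x 1 + E i 2 * x 2 := by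
    intro i
    simp [hy, Matrix.mulVec, dotProduct, Fin.sum_univ_three]
  have hs : ∀ i j, eps j i = eps i j := fun i j => heps.apply i j
  have htarget : (∑ i, ∑ j, x i * E i j * x j) = x 0 * y 0 + x 1 * y 1 + x 2 * y 2 := by
    simp only [Fin.sum_univ_three, hyd]
    ring
  rw [htarget]
  set t : ℝ := Lam⁻¹ with hts
  have htL : Lam * t = 1 := mul_inv_cancel₀ hL.ne'
  have ht0 : 0 < t := inv_pos.2 hL
  have h1 := hlb (fun i => y i - t * x i)
  have h2 := hub x
  simp only [Fin.sum_univ_three] at h1 h2 ⊢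
  have e0 := hx 0; have e1 := hx 1; have e2 := hx 2
  have s01 := hs 0 1; have s02 := hs 0 2; have s12 := hs 1 2
  set X : ℝ := x 0 ^ 2 + x 1 ^ 2 + x 2 ^ 2 with hX
  set qx : ℝ := x 0 * eps 0 0 * x 0 + x 0 * eps 0 1 * x 1 + x 0 * eps 0 2 * x 2 +
      (x 1 * eps 1 0 * x 0 + x 1 * eps 1 1 * x 1 + x 1 * eps 1 2 * x 2) +
      (x 2 * eps 2 0 * x 0 + x 2 * eps 2 1 * x 1 + x 2 * eps 2 2 * x 2) with hqx
  have hq : (y 0 - t * x 0) * eps 0 0 * (y 0 - t * x 0) + (y 0 - t * x 0) * eps 0 1 * (y 1 - t * x 1) +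
          (y 0 - t * x 0) * eps 0 2 * (y 2 - t * x 2) +
        ((y 1 - t * x 1) * eps 1 0 * (y 0 - t * x 0) + (y 1 - t * x 1) * eps 1 1 * (y 1 - t * x 1) +
          (y 1 - t * x 1) * eps 1 2 * (y 2 - t * x 2)) +
      ((y 2 - t * x 2) * eps 2 0 * (y 0 - t * x 0) + (y 2 - t * x 2) * eps 2 1 * (y 1 - t * x 1) +
        (y 2 - t * x 2) * eps 2 2 * (y 2 - t * x 2)) =
      (x 0 * y 0 + x 1 * y 1 + x 2 * y 2) - 2 * t * X + t ^ 2 * qx := by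
    linear_combination (y 0 - 2 * t * x 0) * e0 + (y 1 - 2 * t * x 1) * e1 + (y 2 - 2 * t * x 2) * e2
      - t * ((y 1 * x 0 - x 1 * y 0) * s01 + (y 2 * x 0 - x 2 * y 0) * s02 + (y 2 * x 1 - x 2 * y 1) * s12)
  rw [hq] at h1
  have h3 : t ^ 2 * qx ≤ t * X := by
    calc t ^ 2 * qx ≤ t ^ 2 * (Lam * X) := by nlinarith [sq_nonneg t]
    _ = t * ((Lam * t) * X) := by ring
    _ = t * X := by rw [htL]; ring
  linarith

set_option maxHeartbeats 2000000 in
lemma cross_identity (E : Matrix (Fin 3) (Fin 3) ℝ) (mu m : ℝ) (hmu : mu ≠ 0) (a b : Fin 3 → ℝ) :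
    (∑ i, ∑ j, ∑ k, ∑ l,
        (mu * kron i j * (m * mu⁻¹ * kron l k)
          - (kron j l * E k i + kron i k * E l j - kron j k * E l i
             - kron i l * E k j
             + (kron i l * kron j k - kron i k * kron j l) * E.trace))
          * a i * a k * b j * b l) =
      m * (a 0 * b 0 + a 1 * b 1 + a 2 * b 2) ^ 2 +
      ∑ i, ∑ j, (fun i => ![a 1 * b 2 - a 2 * b 1, a 2 * b 0 - a 0 * b 2, a 0 * b 1 - a 1 * b 0] i) i
        * E i j * (fun i => ![a 1 * b 2 - a 2 * b 1, a 2 * b 0 - a 0 * b 2, a 0 * b 1 - a 1 * b 0] i) j := by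
  simp [Fin.sum_univ_three, kron, Matrix.trace_fin_three]
  field_simp
  ring

/-- Strong ellipticity (Legendre–Hadamard) of the tensor `C^A` built from `ε⁻¹`
with `M^A = m μ⁻¹ I`: `Σ C^A_{ijkℓ} a_i a_k b_j b_ℓ ≥ min(Λ⁻¹, m) |a|²|b|²`. -/
theorem stmt9 (eps : Matrix (Fin 3) (Fin 3) ℝ) (heps : eps.IsSymm) (hpd : eps.PosDef)
    (lam Lam : ℝ) (hlam : 0 < lam) (hlL : lam ≤ Lam)
    (hbound : ∀ x : Fin 3 → ℝ,
      lam * (∑ i, x i ^ 2) ≤ (∑ i, ∑ j, x i * eps i j * x j) ∧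
      (∑ i, ∑ j, x i * eps i j * x j) ≤ Lam * (∑ i, x i ^ 2))
    (mu m : ℝ) (hmu : 0 < mu) (hm : 0 < m) (a b : Fin 3 → ℝ) :
    min Lam⁻¹ m * (∑ i, a i ^ 2) * (∑ i, b i ^ 2) ≤
      ∑ i, ∑ j, ∑ k, ∑ l,
        (mu * kron i j * (m * mu⁻¹ * kron l k)
          - (kron j l * eps⁻¹ k i + kron i k * eps⁻¹ l j - kron j k * eps⁻¹ l i
             - kron i l * eps⁻¹ k j
             + (kron i l * kron j k - kron i k * kron j l) * (eps⁻¹).trace))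
          * a i * a k * b j * b l := by
  have hL : 0 < Lam := lt_of_lt_of_le hlam hlL
  have hinv : eps * eps⁻¹ = 1 :=
    Matrix.mul_nonsing_inv eps (isUnit_iff_ne_zero.2 hpd.det_pos.ne')
  have hlb : ∀ u : Fin 3 → ℝ, 0 ≤ ∑ i, ∑ j, u i * eps i j * u j := by
    intro u
    have h1 := (hbound u).1
    have h2 : 0 ≤ ∑ i, u i ^ 2 := Finset.sum_nonneg fun i _ => sq_nonneg _
    nlinarith
  have hub : ∀ u : Fin 3 → ℝ, (∑ i, ∑ j, u i * eps i j * u j) ≤ Lam * ∑ i, u i ^ 2 :=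
    fun u => (hbound u).2
  rw [cross_identity (eps⁻¹) mu m hmu.ne' a b]
  set w : Fin 3 → ℝ :=
    (fun i => ![a 1 * b 2 - a 2 * b 1, a 2 * b 0 - a 0 * b 2, a 0 * b 1 - a 1 * b 0] i) with hw
  have hkey := key_inv_bound eps (eps⁻¹) heps hinv Lam hL hlb hub w
  have hwsum : (∑ i, w i ^ 2) =
      (∑ i, a i ^ 2) * (∑ i, b i ^ 2) - (a 0 * b 0 + a 1 * b 1 + a 2 * b 2) ^ 2 := by
    simp [hw, Fin.sum_univ_three]
    ring
  have hw0 : 0 ≤ (∑ i, w i ^ 2) := Finset.sum_nonneg fun i _ => sq_nonneg _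
  rw [hwsum] at hkey hw0
  set A : ℝ := ∑ i, a i ^ 2
  set B : ℝ := ∑ i, b i ^ 2
  set d : ℝ := a 0 * b 0 + a 1 * b 1 + a 2 * b 2
  have hd2 : 0 ≤ d ^ 2 := sq_nonneg d
  have hLinv : 0 < Lam⁻¹ := inv_pos.2 hL
  have hkey2 : Lam⁻¹ * (A * B - d ^ 2) ≤
      ∑ i : Fin ((Nat.succ 0).succ.succ), ∑ j : Fin 3, w i * eps⁻¹ i j * w j := hkey
  rcases le_total Lam⁻¹ m with h | h
  · rw [min_eq_left h]
    have h5 : Lam⁻¹ * d ^ 2 ≤ m * d ^ 2 := mul_le_mul_of_nonneg_right h hd2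
    linarith [hkey2, h5]
  · rw [min_eq_right h]
    have h5 : m * (A * B - d ^ 2) ≤ Lam⁻¹ * (A * B - d ^ 2) :=
      mul_le_mul_of_nonneg_right h hw0
    have h6 : m * A * B = m * d ^ 2 + m * (A * B - d ^ 2) := by ring
    linarith [hkey2, h5]
end

section
/- Let ε be a 3×3 real symmetric positive definite matrix with smallest eigenvalue ≥ λ > 0, μ > 0 a scalar, m > 0. Then there exists c₀ > 0 such that m(aᵀεb)² + (|a|²|b|² - (a·b)²) ≥ c₀ |a|² |b|² for all a, b ∈ ℝ³; i.e., the system (mB) with M^B = mμ⁻¹ε is strongly elliptic. -/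
private lemma cs3 (x y : Fin 3 → ℝ) :
    (∑ i, x i * y i) ^ 2 ≤ (∑ i, x i ^ 2) * (∑ i, y i ^ 2) := by
  simp only [Fin.sum_univ_three]
  nlinarith [sq_nonneg (x 0 * y 1 - x 1 * y 0), sq_nonneg (x 0 * y 2 - x 2 * y 0),
    sq_nonneg (x 1 * y 2 - x 2 * y 1)]

set_option maxHeartbeats 1600000 in
/-- Strong ellipticity of the system with `M^B = m μ⁻¹ ε`: there is `c₀ > 0` with
`m (aᵀεb)² + (|a|²|b|² - (a·b)²) ≥ c₀ |a|²|b|²` for all `a, b ∈ ℝ³`. -/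
theorem stmt11 (eps : Matrix (Fin 3) (Fin 3) ℝ) (heps : eps.IsSymm) (hpd : eps.PosDef)
    (lam : ℝ) (hlam : 0 < lam)
    (hbound : ∀ x : Fin 3 → ℝ, lam * (∑ i, x i ^ 2) ≤ ∑ i, ∑ j, x i * eps i j * x j)
    (m : ℝ) (hm : 0 < m) :
    ∃ c₀ > 0, ∀ a b : Fin 3 → ℝ,
      c₀ * (∑ i, a i ^ 2) * (∑ i, b i ^ 2) ≤
        m * (∑ i, ∑ j, a i * eps i j * b j) ^ 2
          + ((∑ i, a i ^ 2) * (∑ i, b i ^ 2) - (∑ i, a i * b i) ^ 2) := by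
  set E := ∑ i, ∑ j, (eps i j) ^ 2 with hEdef
  have hE0 : 0 ≤ E := by positivity
  set δ := lam ^ 2 / (2 * lam ^ 2 + 4 * E) with hδdef
  have hδ0 : 0 < δ := by positivity
  have hδeq : δ * (2 * lam ^ 2 + 4 * E) = lam ^ 2 := by
    rw [hδdef]; field_simp
  have hδhalf : δ ≤ 1 / 2 := by
    rw [hδdef, div_le_iff₀ (by positivity)]
    nlinarith
  refine ⟨min δ (m * lam ^ 2 / 4), lt_min hδ0 (by positivity), ?_⟩
  intro a b
  set A := ∑ i, a i ^ 2 with hAdef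
  set B := ∑ i, b i ^ 2 with hBdef
  set S := ∑ i, a i * b i with hSdef
  set P := ∑ i, ∑ j, a i * eps i j * b j with hPdef
  set Q := ∑ i, ∑ j, a i * eps i j * a j with hQdef
  have hA0 : 0 ≤ A := by positivity
  have hB0 : 0 ≤ B := by positivity
  have hCS : S ^ 2 ≤ A * B := cs3 a b
  have hQ : lam * A ≤ Q := hbound a
  have hQ0 : 0 ≤ Q := le_trans (by positivity) hQ
  -- the vector w = A • b - S • a
  set w : Fin 3 → ℝ := fun j => A * b j - S * a j with hwdef
  have hW : (∑ j, (w j) ^ 2) = A * (A * B - S ^ 2) := by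
    simp only [hwdef, hAdef, hBdef, hSdef, Fin.sum_univ_three]; ring
  have hR : (∑ j, (∑ i, a i * eps i j) * w j) = A * P - S * Q := by
    simp only [hwdef, hPdef, hQdef, hAdef, hSdef, Fin.sum_univ_three]; ring
  -- bound on ∑ (∑ aᵢ εᵢⱼ)²
  have hu : (∑ j, (∑ i, a i * eps i j) ^ 2) ≤ E * A := by
    have key : ∀ j, (∑ i, a i * eps i j) ^ 2 ≤ (∑ i, (eps i j) ^ 2) * A := by
      intro j
      have := cs3 (fun i => eps i j) a
      calc (∑ i, a i * eps i j) ^ 2 = (∑ i, eps i j * a i) ^ 2 := by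
            simp only [mul_comm]
        _ ≤ (∑ i, (eps i j) ^ 2) * A := this
    calc (∑ j, (∑ i, a i * eps i j) ^ 2) ≤ ∑ j, (∑ i, (eps i j) ^ 2) * A :=
          Finset.sum_le_sum fun j _ => key j
      _ = E * A := by rw [← Finset.sum_mul, hEdef, Finset.sum_comm]
  -- Cauchy-Schwarz for R
  have hR2 : (A * P - S * Q) ^ 2 ≤ (E * A) * (A * (A * B - S ^ 2)) := by
    rw [← hR, ← hW]
    calc (∑ j, (∑ i, a i * eps i j) * w j) ^ 2
        ≤ (∑ j, (∑ i, a i * eps i j) ^ 2) * (∑ j, (w j) ^ 2) :=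
          cs3 (fun j => ∑ i, a i * eps i j) w
      _ ≤ (E * A) * (∑ j, (w j) ^ 2) := by
          have : 0 ≤ ∑ j, (w j) ^ 2 := by positivity
          exact mul_le_mul_of_nonneg_right hu this
  clear_value A B S P Q E δ w
  clear hEdef hδdef hAdef hBdef hSdef hPdef hQdef hwdef hW hR hu hbound w heps hpd a b
  by_cases h : δ * (A * B) ≤ A * B - S ^ 2
  · -- easy case
    have h1 : min δ (m * lam ^ 2 / 4) * (A * B) ≤ δ * (A * B) := by
      have := min_le_left δ (m * lam ^ 2 / 4)
      nlinarith
    nlinarith [sq_nonneg P, mul_nonneg (le_of_lt hm) (sq_nonneg P)]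
  · push_neg at h
    -- hard case: S² close to AB, so P is big
    have hAB0 : 0 < A * B := by
      by_contra hc
      push_neg at hc
      have : A * B ≤ 0 := hc
      nlinarith
    have hA0' : 0 < A := by
      rcases lt_or_eq_of_le hA0 with h' | h'
      · exact h'
      · exfalso; nlinarith
    have hS2 : (1 - δ) * (A * B) < S ^ 2 := by nlinarith
    -- (S*Q)² ≥ (1-δ)AB λ² A²
    have hSQ : (1 - δ) * (A * B) * (lam ^ 2 * A ^ 2) ≤ (S * Q) ^ 2 := by
      have h1 : (1 - δ) * (A * B) ≤ S ^ 2 := le_of_lt hS2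
      have h2 : lam ^ 2 * A ^ 2 ≤ Q ^ 2 := by
        nlinarith [mul_nonneg (sub_nonneg.mpr hQ) (add_nonneg hQ0 (by positivity : (0:ℝ) ≤ lam * A))]
      have h3 : 0 ≤ (1 - δ) * (A * B) := by nlinarith
      have h4 : 0 ≤ lam ^ 2 * A ^ 2 := by positivity
      calc (1 - δ) * (A * B) * (lam ^ 2 * A ^ 2) ≤ S ^ 2 * (lam ^ 2 * A ^ 2) :=
            mul_le_mul_of_nonneg_right h1 h4
        _ ≤ S ^ 2 * Q ^ 2 := mul_le_mul_of_nonneg_left h2 (sq_nonneg S)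
        _ = (S * Q) ^ 2 := by ring
    -- R² ≤ δ E A³ B
    have hR2' : (A * P - S * Q) ^ 2 ≤ δ * E * A ^ 2 * (A * B) := by
      have h1 : A * (A * B - S ^ 2) ≤ A * (δ * (A * B)) :=
        mul_le_mul_of_nonneg_left (le_of_lt h) hA0
      calc (A * P - S * Q) ^ 2 ≤ (E * A) * (A * (A * B - S ^ 2)) := hR2
        _ ≤ (E * A) * (A * (δ * (A * B))) := by
            apply mul_le_mul_of_nonneg_left h1 (by positivity)
        _ = δ * E * A ^ 2 * (A * B) := by ring
    -- (A P)² = (SQ + R)² ≥ (SQ)²/2 - R²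
    have hAP : (S * Q) ^ 2 / 2 - (A * P - S * Q) ^ 2 ≤ (A * P) ^ 2 := by
      nlinarith [sq_nonneg (S * Q + 2 * (A * P - S * Q))]
    -- combine: A² P² ≥ A² (AB λ²/4)
    have hkey : A ^ 2 * (A * B * (lam ^ 2 / 4)) ≤ A ^ 2 * P ^ 2 := by
      have hc2 : (1 - δ) * (A * B) * (lam ^ 2 * A ^ 2) / 2 - δ * E * A ^ 2 * (A * B)
          = A ^ 2 * (A * B * (lam ^ 2 / 4)) := by
        linear_combination (-(A ^ 2 * (A * B)) / 4) * hδeq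
      nlinarith [hSQ, hR2', hAP, hc2]
    have hP2 : A * B * (lam ^ 2 / 4) ≤ P ^ 2 := by
      have hA2 : (0:ℝ) < A ^ 2 := by positivity
      exact le_of_mul_le_mul_left hkey hA2
    have h1 : min δ (m * lam ^ 2 / 4) ≤ m * lam ^ 2 / 4 := min_le_right _ _
    have h2 := mul_le_mul_of_nonneg_right h1 (le_of_lt hAB0)
    have h3 := mul_le_mul_of_nonneg_left hP2 (le_of_lt hm)
    nlinarith [hCS]
end
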